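/- For every natural number n ≥ 1, the number of permutations of length n avoiding both patterns 123 and 132 equals 2^(n−1). -/

import Mathlib

/-!
A permutation avoids both 123 and 132 exactly when no entry is followed by two larger entries.
For a permutation of length `n + 1` this forces the first entry to be one of the two largest
values, and conversely such a first entry followed by any avoider of length `n` (placed on the
remaining values) is again an avoider. Hence the count doubles at each step from length 1 on.
-/

/-- A permutation `π` of length `n` contains the pattern `p` (a length-`k`
sequence of distinct values, given by its values) if there is a strictly
increasing choice of `k` indices on which `π` is order isomorphic to `p`. -/
def PermContains {n k : ℕ} (π : Equiv.Perm (Fin n)) (p : Fin k → ℕ) : Prop :=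
  ∃ f : Fin k → Fin n, StrictMono f ∧ ∀ a b : Fin k, p a < p b ↔ π (f a) < π (f b)

/-- `π` avoids the pattern `p`. -/
def PermAvoids {n k : ℕ} (π : Equiv.Perm (Fin n)) (p : Fin k → ℕ) : Prop :=
  ¬ PermContains π p

open Equiv Function

lemma strictMono_vec3 {α : Type*} [Preorder α] {a b c : α} (hab : a < b) (hbc : b < c) :
    StrictMono ![a, b, c] := by
  simp [hab, hbc, Subsingleton.strictMono]

section Patterns

variable {n : ℕ} (π : Perm (Fin n))

lemma permContains_123_iff :
    PermContains π ![1, 2, 3] ↔ ∃ i j k, i < j ∧ j < k ∧ π i < π j ∧ π j < π k := by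
  constructor
  · rintro ⟨f, hf, hp⟩
    exact ⟨f 0, f 1, f 2, hf (by decide), hf (by decide), (hp 0 1).1 (by decide),
      (hp 1 2).1 (by decide)⟩
  · rintro ⟨i, j, k, hij, hjk, h1, h2⟩
    refine ⟨![i, j, k], strictMono_vec3 hij hjk, fun a b => ?_⟩
    fin_cases a <;> fin_cases b <;> simp <;> order

lemma permContains_132_iff :
    PermContains π ![1, 3, 2] ↔ ∃ i j k, i < j ∧ j < k ∧ π i < π k ∧ π k < π j := by
  constructor
  · rintro ⟨f, hf, hp⟩
    exact ⟨f 0, f 1, f 2, hf (by decide), hf (by decide), (hp 0 2).1 (by decide),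
      (hp 2 1).1 (by decide)⟩
  · rintro ⟨i, j, k, hij, hjk, h1, h2⟩
    refine ⟨![i, j, k], strictMono_vec3 hij hjk, fun a b => ?_⟩
    fin_cases a <;> fin_cases b <;> simp <;> order

def Equiv.Perm.NoTwoLaterLarger : Prop :=
  ∀ ⦃i j k : Fin n⦄, i < j → j < k → ¬ (π i < π j ∧ π i < π k)

lemma permAvoids_123_132_iff :
    (PermAvoids π ![1, 2, 3] ∧ PermAvoids π ![1, 3, 2]) ↔ π.NoTwoLaterLarger := by
  constructor
  · rintro ⟨h123, h132⟩ i j k hij hjk ⟨hj, hk⟩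
    rcases lt_or_gt_of_ne (π.injective.ne hjk.ne) with hjk' | hjk'
    · exact h123 ((permContains_123_iff π).2 ⟨i, j, k, hij, hjk, hj, hjk'⟩)
    · exact h132 ((permContains_132_iff π).2 ⟨i, j, k, hij, hjk, hk, hjk'⟩)
  · intro h
    refine ⟨fun h123 => ?_, fun h132 => ?_⟩
    · obtain ⟨i, j, k, hij, hjk, h1, h2⟩ := (permContains_123_iff π).1 h123
      exact h hij hjk ⟨h1, h1.trans h2⟩
    · obtain ⟨i, j, k, hij, hjk, h1, h2⟩ := (permContains_132_iff π).1 h132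
      exact h hij hjk ⟨h1.trans h2, h1⟩

end Patterns

namespace Equiv.Perm

variable {n : ℕ}

noncomputable def finCons (v : Fin (n + 1)) (σ : Perm (Fin n)) : Perm (Fin (n + 1)) :=
  ofBijective (Fin.cons v (v.succAbove ∘ σ)) <| Finite.injective_iff_bijective.mp <|
    Fin.cons_injective_iff.mpr ⟨fun ⟨j, hj⟩ => Fin.succAbove_ne v (σ j) hj,
      Fin.succAbove_right_injective.comp σ.injective⟩

@[simp] lemma finCons_apply_zero (v : Fin (n + 1)) (σ : Perm (Fin n)) : finCons v σ 0 = v := rfl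

@[simp] lemma finCons_apply_succ (v : Fin (n + 1)) (σ : Perm (Fin n)) (j : Fin n) :
    finCons v σ j.succ = v.succAbove (σ j) := by
  simp [finCons]

lemma finCons_injective : Injective fun x : Fin (n + 1) × Perm (Fin n) => finCons x.1 x.2 := by
  rintro ⟨v, σ⟩ ⟨w, τ⟩ h
  have hvw : v = w := by simpa using congr($h 0)
  subst hvw
  rw [show σ = τ from Equiv.ext fun j => by simpa using congr($h j.succ)]

lemma finCons_surjective : Surjective fun x : Fin (n + 1) × Perm (Fin n) => finCons x.1 x.2 := by
  intro π
  have hne (j : Fin n) : π j.succ ≠ π 0 := π.injective.ne (Fin.succ_ne_zero j)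
  choose τ hτ using fun j => Fin.exists_succAbove_eq (hne j)
  have hτinj : Injective τ := fun i j hij =>
    Fin.succ_injective _ (π.injective (by rw [← hτ i, ← hτ j, hij]))
  refine ⟨(π 0, ofBijective τ (Finite.injective_iff_bijective.mp hτinj)),
    Equiv.ext fun j => ?_⟩
  cases j using Fin.cases <;> simp [hτ]

noncomputable def finConsEquiv : Fin (n + 1) × Perm (Fin n) ≃ Perm (Fin (n + 1)) :=
  ofBijective _ ⟨finCons_injective, finCons_surjective⟩

lemma NoTwoLaterLarger.eq_of_apply_zero_lt {π : Perm (Fin (n + 1))} (h : π.NoTwoLaterLarger)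
    {a b : Fin (n + 1)} (ha : π 0 < a) (hb : π 0 < b) : a = b := by
  have hpos {c} (hc : π 0 < c) : 0 < π.symm c :=
    Fin.pos_iff_ne_zero.mpr fun h0 => hc.ne (by rw [← h0, apply_symm_apply])
  by_contra hab
  rcases lt_or_gt_of_ne (π.symm.injective.ne hab) with hlt | hlt
  · exact h (hpos ha) hlt ⟨by simpa using ha, by simpa using hb⟩
  · exact h (hpos hb) hlt ⟨by simpa using hb, by simpa using ha⟩

lemma eq_of_sub_one_le_apply_zero {π : Perm (Fin (n + 1))} (h : n - 1 ≤ (π 0 : ℕ))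
    {j k : Fin (n + 1)}
    (hj : π 0 < π j) (hk : π 0 < π k) : j = k := by
  refine π.injective (Fin.ext ?_)
  have := (π j).is_le
  have := (π k).is_le
  rw [Fin.lt_def] at hj hk
  omega

lemma noTwoLaterLarger_finCons_iff {v : Fin (n + 1)} {σ : Perm (Fin n)} :
    (finCons v σ).NoTwoLaterLarger ↔ n - 1 ≤ (v : ℕ) ∧ σ.NoTwoLaterLarger := by
  constructor
  · intro h
    refine ⟨?_, fun i j k hij hjk hσ => h (Fin.succ_lt_succ_iff.mpr hij)
      (Fin.succ_lt_succ_iff.mpr hjk) (by simpa using hσ)⟩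
    by_contra! hv
    have := h.eq_of_apply_zero_lt (a := Fin.last n) (b := ⟨n - 1, by omega⟩)
      (by simp [Fin.lt_def]; omega) (by simp [Fin.lt_def]; omega)
    simp [Fin.ext_iff] at this
    omega
  · rintro ⟨hv, hσ⟩ i j k hij hjk ⟨hj, hk⟩
    cases j using Fin.cases with
    | zero => exact Fin.not_lt_zero _ hij
    | succ j =>
    cases k using Fin.cases with
    | zero => exact Fin.not_lt_zero _ hjk
    | succ k =>
    cases i using Fin.cases with
    | zero => exact hjk.ne (eq_of_sub_one_le_apply_zero (by simpa using hv) hj hk)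
    | succ i =>
      exact hσ (Fin.succ_lt_succ_iff.mp hij) (Fin.succ_lt_succ_iff.mp hjk)
        ⟨by simpa using hj, by simpa using hk⟩

lemma card_sub_one_le_val (n : ℕ) :
    Nat.card {v : Fin (n + 1) // n - 1 ≤ (v : ℕ)} = n + 1 - (n - 1) := by
  have : ({v | n - 1 ≤ (v : ℕ)} : Finset (Fin (n + 1))) = Finset.Ici ⟨n - 1, by omega⟩ := by
    ext v; simp [Fin.le_def]
  rw [Nat.card_eq_fintype_card, Fintype.card_subtype, this, Fin.card_Ici]

lemma card_noTwoLaterLarger_succ (n : ℕ) :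
    Nat.card {π : Perm (Fin (n + 1)) // π.NoTwoLaterLarger} =
      (n + 1 - (n - 1)) * Nat.card {σ : Perm (Fin n) // σ.NoTwoLaterLarger} := by
  let e : {π : Perm (Fin (n + 1)) // π.NoTwoLaterLarger} ≃
      {v : Fin (n + 1) // n - 1 ≤ (v : ℕ)} × {σ : Perm (Fin n) // σ.NoTwoLaterLarger} :=
    (finConsEquiv.subtypeEquiv fun _ => Iff.rfl).symm.trans <|
      (subtypeEquivRight fun _ => noTwoLaterLarger_finCons_iff).trans
        (subtypeProdEquivProd (p := fun v : Fin (n + 1) => n - 1 ≤ (v : ℕ))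
          (q := NoTwoLaterLarger))
  rw [Nat.card_congr e, Nat.card_prod, card_sub_one_le_val]

lemma card_noTwoLaterLarger : ∀ n : ℕ,
    Nat.card {π : Perm (Fin n) // π.NoTwoLaterLarger} = 2 ^ (n - 1)
  | 0 => by
    have h (π : Perm (Fin 0)) : π.NoTwoLaterLarger := fun i => i.elim0
    rw [Nat.card_congr (subtypeUnivEquiv h)]
    simp
  | 1 => by rw [card_noTwoLaterLarger_succ, card_noTwoLaterLarger 0]; rfl
  | n + 2 => by
    rw [card_noTwoLaterLarger_succ, card_noTwoLaterLarger (n + 1)]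
    simp [show n + 1 + 1 - n = 2 by omega, pow_succ, mul_comm]

end Equiv.Perm

theorem av123_132_card_general (n : ℕ) :
    Nat.card {π : Equiv.Perm (Fin n) //
        PermAvoids π ![1, 2, 3] ∧ PermAvoids π ![1, 3, 2]} =
      2 ^ (n - 1) := by
  rw [Nat.card_congr (subtypeEquivRight permAvoids_123_132_iff)]
  exact Perm.card_noTwoLaterLarger n

theorem av123_132_card (n : ℕ) (hn : 1 ≤ n) :
    Nat.card {π : Equiv.Perm (Fin n) //
        PermAvoids π ![1, 2, 3] ∧ PermAvoids π ![1, 3, 2]} =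
      2 ^ (n - 1) :=
  av123_132_card_general n
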